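/- Assume the Coxeter graph of m is connected. Let 𝔅 be the group presented by generators 𝗋_{ij}, one for each edge (ij) (i < j) of the Coxeter graph, together with 𝗍_0,…,𝗍_{n−1}; writing 𝗋_{ji} := 𝗋_{ij}^{−1}, the relations are: (1) 𝗋_{i i_1}𝗋_{i_1 i_2}⋯𝗋_{i_a i} = 1 for every closed path (i, i_1, …, i_a, i) along edges of the Coxeter graph; (2) 𝗋_{ij}𝗋_{jk}𝗍_k = 𝗋_{kj}𝗋_{ji}𝗍_i and 𝗍_k𝗋_{ij}𝗋_{jk} = 𝗋_{kj}𝗋_{ji}𝗍_i whenever (ij) and (jk) are edges, i < k and m_{ik} = 2; (3) 𝗋_{ij}𝗋_{jk}𝗋_{kl}𝗍_l = 𝗋_{lk}𝗋_{kj}𝗋_{ji}𝗍_i and 𝗍_l𝗋_{ij}𝗋_{jk}𝗋_{kl} = 𝗋_{lk}𝗋_{kj}𝗋_{ji}𝗍_i whenever (ij), (jk), (kl) are edges, i < l and m_{il} = 2; (4) (𝗋_{ij}𝗍_j)^{m_{ij}/2} = (𝗋_{ji}𝗍_i)^{m_{ij}/2} and (𝗍_j𝗋_{ij})^{m_{ij}/2}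 = (𝗋_{ji}𝗍_i)^{m_{ij}/2} for each edge with m_{ij} finite, even and > 2; (5) (𝗋_{ij}𝗍_j)^{(m_{ij}−1)/2}𝗋_{ij} = (𝗋_{ji}𝗍_i)^{(m_{ij}−1)/2} and (𝗋_{ij}𝗍_j)^{(m_{ij}+1)/2} = 𝗍_i(𝗋_{ji}𝗍_i)^{(m_{ij}−1)/2} for each edge with m_{ij} finite and odd; (6) 𝗋_{ij}𝗋_{lm} = 𝗋_{lm}𝗋_{ij} whenever the edges (ij) and (lm) are not connected. Then the assignment 𝗍_i ↦ g_i² (i = 0,…,n−1) and 𝗋_{ij} ↦ g_i g_j^{−1} (for each edge) extends to a group isomorphism from 𝔅 onto the alternating subgroup 𝓑⁺ of the braid group 𝓑. -/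

import Mathlib

/-- `altProd a b k` is the alternating product `a * b * a * b * ⋯` with `k` factors. -/
def altProd {M : Type*} [Monoid M] (a b : M) : ℕ → M
  | 0 => 1
  | k + 1 => a * altProd b a k

lemma map_altProd {M N : Type*} [Monoid M] [Monoid N] (f : M →* N) (a b : M) :
    ∀ k, f (altProd a b k) = altProd (f a) (f b) k
  | 0 => by simp [altProd]
  | k + 1 => by simp [altProd, map_mul, map_altProd f b a k]

lemma altProd_self {M : Type*} [Monoid M] (a : M) : ∀ k, altProd a a k = a ^ k
  | 0 => by simp [altProd]
  | k + 1 => by rw [altProd, altProd_self a k, ← pow_succ']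

section Braid
variable {n : ℕ}

/-- The braid relations of a Coxeter matrix (entry `0` encodes `∞`, and the
corresponding relation is omitted). -/
def braidRels (M : CoxeterMatrix (Fin n)) : Set (FreeGroup (Fin n)) :=
  { x | ∃ i j : Fin n, i < j ∧ M i j ≠ 0 ∧
      x = altProd (FreeGroup.of i) (FreeGroup.of j) (M i j) *
        (altProd (FreeGroup.of j) (FreeGroup.of i) (M i j))⁻¹ }

/-- The braid group of a Coxeter matrix. -/
def BraidGroup (M : CoxeterMatrix (Fin n)) : Type _ := PresentedGroup (braidRels M)

instance (M : CoxeterMatrix (Fin n)) : Group (BraidGroup M) :=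
  inferInstanceAs (Group (PresentedGroup (braidRels M)))

/-- The generators `g i` of the braid group. -/
def braidGen (M : CoxeterMatrix (Fin n)) (i : Fin n) : BraidGroup M := PresentedGroup.of i

/-- The sign character of the braid group, sending each generator to `-1`. -/
def braidSign (M : CoxeterMatrix (Fin n)) : BraidGroup M →* ℤˣ :=
  PresentedGroup.toGroup (f := fun _ : Fin n => (-1 : ℤˣ)) (by
    rintro x ⟨i, j, hij, hm, rfl⟩
    simp [map_altProd, altProd_self])

/-- The alternating subgroup of the braid group: the kernel of the sign character. -/
def braidAlt (M : CoxeterMatrix (Fin n)) : Subgroup (BraidGroup M) := (braidSign M).ker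

/-- Adjacency in the Coxeter graph: `i ≠ j` and `m_{ij} ≥ 3` (including `m_{ij} = ∞`,
encoded as `0`); equivalently `m_{ij} ≠ 2`. -/
def coxAdj (M : CoxeterMatrix (Fin n)) (i j : Fin n) : Prop := i ≠ j ∧ M i j ≠ 2

/-- The edges `(ij)`, `i < j`, of the Coxeter graph of `M`. -/
def CoxEdge (M : CoxeterMatrix (Fin n)) : Type _ :=
  { p : Fin n × Fin n // p.1 < p.2 ∧ M p.1 p.2 ≠ 2 }

/-- Generators of the edge presentation: one generator `𝗋` for each edge, and one
generator `𝗍_i` for each vertex `i`. -/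
def BethGen (M : CoxeterMatrix (Fin n)) : Type _ := CoxEdge M ⊕ Fin n

/-- The word `𝗋_{ij}` in the free group: the generator of the edge `(ij)` if `i < j`, the
inverse of the generator of the edge `(ji)` if `j < i` (junk value `1` if not an edge). -/
def rW (M : CoxeterMatrix (Fin n)) (i j : Fin n) : FreeGroup (BethGen M) :=
  if h : i < j ∧ M i j ≠ 2 then FreeGroup.of (Sum.inl ⟨(i, j), h⟩)
  else if h' : j < i ∧ M j i ≠ 2 then (FreeGroup.of (Sum.inl ⟨(j, i), h'⟩))⁻¹
  else 1

/-- The word `𝗍_i` in the free group. -/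
def tW (M : CoxeterMatrix (Fin n)) (i : Fin n) : FreeGroup (BethGen M) :=
  FreeGroup.of (Sum.inr i)

/-- The product `𝗋_{i i₁} 𝗋_{i₁ i₂} ⋯` along a path given by a starting vertex and the list
of subsequent vertices. -/
def pathW (M : CoxeterMatrix (Fin n)) : Fin n → List (Fin n) → FreeGroup (BethGen M)
  | _, [] => 1
  | i, j :: l => rW M i j * pathW M j l

/-- The defining relators of the edge presentation `𝔅` of the alternating subgroup of the
braid group (each relation `w₁ = w₂` is encoded by the relator `w₁ * w₂⁻¹`). -/
inductive BethRel (M : CoxeterMatrix (Fin n)) : FreeGroup (BethGen M) → Prop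
  | cycle (i : Fin n) (l : List (Fin n)) (h : List.Chain (coxAdj M) i (l ++ [i])) :
      BethRel M (pathW M i (l ++ [i]))
  | two_left (i j k : Fin n) (hij : coxAdj M i j) (hjk : coxAdj M j k)
      (hik : i < k) (h2 : M i k = 2) :
      BethRel M (rW M i j * rW M j k * tW M k * (rW M k j * rW M j i * tW M i)⁻¹)
  | two_right (i j k : Fin n) (hij : coxAdj M i j) (hjk : coxAdj M j k)
      (hik : i < k) (h2 : M i k = 2) :
      BethRel M (tW M k * rW M i j * rW M j k * (rW M k j * rW M j i * tW M i)⁻¹)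
  | three_left (i j k l : Fin n) (hij : coxAdj M i j) (hjk : coxAdj M j k)
      (hkl : coxAdj M k l) (hil : i < l) (h2 : M i l = 2) :
      BethRel M (rW M i j * rW M j k * rW M k l * tW M l *
        (rW M l k * rW M k j * rW M j i * tW M i)⁻¹)
  | three_right (i j k l : Fin n) (hij : coxAdj M i j) (hjk : coxAdj M j k)
      (hkl : coxAdj M k l) (hil : i < l) (h2 : M i l = 2) :
      BethRel M (tW M l * rW M i j * rW M j k * rW M k l *
        (rW M l k * rW M k j * rW M j i * tW M i)⁻¹)
  | even_left (i j : Fin n) (hij : i < j) (h2 : 2 < M i j) (he : M i j % 2 = 0) :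
      BethRel M ((rW M i j * tW M j) ^ (M i j / 2) * ((rW M j i * tW M i) ^ (M i j / 2))⁻¹)
  | even_right (i j : Fin n) (hij : i < j) (h2 : 2 < M i j) (he : M i j % 2 = 0) :
      BethRel M ((tW M j * rW M i j) ^ (M i j / 2) * ((rW M j i * tW M i) ^ (M i j / 2))⁻¹)
  | odd_left (i j : Fin n) (hij : i < j) (hadj : M i j ≠ 2) (ho : M i j % 2 = 1) :
      BethRel M ((rW M i j * tW M j) ^ ((M i j - 1) / 2) * rW M i j *
        (((rW M j i * tW M i) ^ ((M i j - 1) / 2))⁻¹))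
  | odd_right (i j : Fin n) (hij : i < j) (hadj : M i j ≠ 2) (ho : M i j % 2 = 1) :
      BethRel M ((rW M i j * tW M j) ^ ((M i j + 1) / 2) *
        ((tW M i * (rW M j i * tW M i) ^ ((M i j - 1) / 2))⁻¹))
  | comm (e e' : CoxEdge M)
      (h11 : M e.1.1 e'.1.1 = 2) (h12 : M e.1.1 e'.1.2 = 2)
      (h21 : M e.1.2 e'.1.1 = 2) (h22 : M e.1.2 e'.1.2 = 2)
      (d11 : e.1.1 ≠ e'.1.1) (d12 : e.1.1 ≠ e'.1.2)
      (d21 : e.1.2 ≠ e'.1.1) (d22 : e.1.2 ≠ e'.1.2) :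
      BethRel M (FreeGroup.of (Sum.inl e) * FreeGroup.of (Sum.inl e') *
        (FreeGroup.of (Sum.inl e') * FreeGroup.of (Sum.inl e))⁻¹)

end Braid

/-!
The map `φ : 𝗍_i ↦ g_i²`, `𝗋_{ij} ↦ g_i g_j⁻¹` respects the relations and lands in `𝓑⁺`. To
invert it, let `𝓑` act on `𝔅 × Bool`, the two sheets standing for `𝓑⁺` and `g_{i₀}⁻¹ 𝓑⁺`: `g_x`
exchanges the sheets, multiplying by `σ_x⁻¹ 𝗍_x` or by `σ_x`, where `σ_x = 𝗋_{x ⋯ i₀}` is a path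
word in the connected Coxeter graph. The braid relations of this action are relations (4) and (5)
for the path words `ρ = 𝗋_{i ⋯ j}`. For `m_{ij} = 2` they say `𝗍_i = ρ² 𝗍_j` with `ρ` commuting
with `𝗍_j`; this follows by induction on the distance from `i` to `j`, from relations (2) and (3) at
distance 2 and 3, and from relation (6) between the two end edges of a geodesic beyond.
The section `(y, b) ↦ g_{i₀}^{-b} φ(y)` is equivariant and `φ(y)` multiplies the sheet `false` by
`y`; hence `φ` is injective, and every `u ∈ 𝓑⁺` is `φ(y)` for `(y, false) = u • (1, false)`.
-/

section Algebra

variable {G : Type*} [Group G]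

lemma altProd_two_mul {N : Type*} [Monoid N] (a b : N) :
    ∀ q, altProd a b (2 * q) = (a * b) ^ q
  | 0 => by simp [altProd]
  | q + 1 => by
    rw [Nat.mul_succ, altProd, altProd, altProd_two_mul a b q, pow_succ', mul_assoc]

lemma altProd_two_mul_add_one {N : Type*} [Monoid N] (a b : N) (q : ℕ) :
    altProd a b (2 * q + 1) = (a * b) ^ q * a := by
  rw [mul_pow_mul, ← altProd_two_mul, altProd]

lemma pow_sq_mul_inv_eq_of_pow_eq {a b : G} {q : ℕ} (h : (a * b) ^ q = (b * a) ^ q) :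
    (b * (b * (a * b⁻¹))) ^ q = (b * a) ^ q := by
  calc _ = b * (b * a) ^ q * b⁻¹ := by rw [← conj_pow, mul_assoc, mul_assoc]
    _ = (b * a) ^ q := by rw [← h, ← mul_pow_mul, mul_inv_cancel_right, h]

lemma pow_succ_eq_sq_mul_of_braid {a b : G} {k : ℕ} (h : (a * b) ^ k * a = (b * a) ^ k * b) :
    (a * b) ^ (k + 1) = a * (a * (b * a) ^ k) := by
  rw [pow_succ, ← mul_assoc, mul_pow_mul, mul_assoc, ← h, mul_pow_mul]

lemma twist_of_mul_eq_inv_mul {ρ s t : G} (h₁ : ρ * s = ρ⁻¹ * t) (h₂ : s * ρ = ρ⁻¹ * t) :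
    t = ρ * ρ * s ∧ Commute ρ s := by
  refine ⟨by rw [mul_assoc, h₁, mul_inv_cancel_left], ?_⟩
  rw [Commute, SemiconjBy, h₁, h₂]

lemma twist_symm {ρ s t : G} (h : t = ρ * ρ * s) (hc : Commute ρ s) :
    s = ρ⁻¹ * ρ⁻¹ * t ∧ Commute ρ⁻¹ t := by
  subst h
  exact ⟨by group, ((Commute.refl ρ).mul_right (Commute.refl ρ) |>.mul_right hc).inv_left⟩

lemma twist_of_commute_ends {a e x ti tv tw tj : G} (hae : Commute a e) (hv : tv = x * x * tw)
    (hi : ti = a * x * (a * x) * tw) (hv' : tv = x * e * (x * e) * tj) :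
    ti = a * x * e * (a * x * e) * tj := by
  have hw : tw = x⁻¹ * e * x * e * tj := by
    rw [← inv_mul_cancel_left (x * x) tw, ← hv, hv']; group
  calc ti = a * x * (a * e) * x * e * tj := by rw [hi, hw]; group
    _ = a * x * e * (a * x * e) * tj := by rw [hae.eq]; group

lemma commute_mul_of_twists {a b tx ty tz : G} (hx : tx = a * a * ty) (ha : Commute a ty)
    (hy : ty = b * b * tz) (hb : Commute b tz) (hxz : tx = a * b * (a * b) * tz) :
    Commute (a * b) tz := by
  have hsq : a * a * (b * b) = a * b * (a * b) :=
    mul_right_cancel (b := tz) (by rw [← hxz, hx, hy, mul_assoc])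
  have hab : Commute a b :=
    calc a * b = a⁻¹ * (a * a * (b * b)) * b⁻¹ := by group
      _ = b * a := by rw [hsq]; group
  have hatz : Commute a tz := by
    rw [show tz = b⁻¹ * b⁻¹ * ty by rw [hy]; group]
    exact (hab.inv_right.mul_right hab.inv_right).mul_right ha
  exact hatz.mul_left hb

lemma odd_rel_swap {ρ ti tj : G} {k : ℕ} (hL : (ρ * tj) ^ k * ρ = (ρ⁻¹ * ti) ^ k)
    (hR : (ρ * tj) ^ (k + 1) = ti * (ρ⁻¹ * ti) ^ k) :
    (ρ⁻¹ * ti) ^ (k + 1) = tj * (ρ * tj) ^ k := by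
  have h₁ : (ρ⁻¹ * ti) ^ (k + 1) = (ρ * tj) ^ k * ti := by rw [pow_succ, ← hL]; group
  have h₂ : ρ * ((ρ * tj) ^ k * ti) = ti * ((ρ * tj) ^ k * ρ) := by
    have := pow_mul_comm (ρ⁻¹ * ti) k (k + 1)
    rw [h₁, ← hL] at this
    exact mul_left_cancel (a := (ρ * tj) ^ k) (by simpa only [mul_assoc] using this)
  have h₃ : ti * ((ρ * tj) ^ k * ρ) = ρ * (tj * (ρ * tj) ^ k) := by
    rw [hL, ← hR, pow_succ', mul_assoc]
  rw [h₁]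
  exact mul_left_cancel (h₂.trans h₃)

end Algebra

theorem SimpleGraph.Connected.exists_adj_dist_add_one_eq {V : Type*} {G : SimpleGraph V}
    (hG : G.Connected) {u v : V} (h : u ≠ v) : ∃ w, G.Adj u w ∧ G.dist w v + 1 = G.dist u v := by
  obtain ⟨p, hp⟩ := hG.exists_walk_length_eq_dist u v
  cases p with
  | nil => exact absurd rfl h
  | @cons _ w _ hadj q =>
    refine ⟨w, hadj, le_antisymm ?_ ?_⟩
    · rw [← hp, SimpleGraph.Walk.length_cons]
      exact Nat.add_le_add_right (SimpleGraph.dist_le q) 1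
    · have := hG.dist_triangle (u := u) (v := w) (w := v)
      rwa [SimpleGraph.dist_eq_one_iff_adj.2 hadj, add_comm] at this

section Coxeter

variable {n : ℕ} (M : CoxeterMatrix (Fin n))

lemma CoxeterMatrix.ne_of_eq_two {i j : Fin n} (h : M i j = 2) : i ≠ j := by
  rintro rfl
  simp at h

lemma braidGen_altProd {i j : Fin n} (hij : i < j) (hm : M i j ≠ 0) :
    altProd (braidGen M i) (braidGen M j) (M i j) =
      altProd (braidGen M j) (braidGen M i) (M i j) := by
  have h := PresentedGroup.one_of_mem (rels := braidRels M) ⟨i, j, hij, hm, rfl⟩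
  rwa [map_mul, map_inv, map_altProd, map_altProd, mul_inv_eq_one] at h

lemma braidGen_even {i j : Fin n} (hij : i < j) {q : ℕ} (hq : M i j = 2 * q) (hq0 : 0 < q) :
    (braidGen M i * braidGen M j) ^ q = (braidGen M j * braidGen M i) ^ q := by
  have := braidGen_altProd M hij (by omega)
  rwa [hq, altProd_two_mul, altProd_two_mul] at this

lemma braidGen_odd {i j : Fin n} (hij : i < j) {k : ℕ} (hk : M i j = 2 * k + 1) :
    (braidGen M i * braidGen M j) ^ k * braidGen M i =
      (braidGen M j * braidGen M i) ^ k * braidGen M j := by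
  have := braidGen_altProd M hij (by omega)
  rwa [hk, altProd_two_mul_add_one, altProd_two_mul_add_one] at this

lemma braidGen_commute {i j : Fin n} (h : M i j = 2) :
    Commute (braidGen M i) (braidGen M j) := by
  wlog hij : i < j generalizing i j
  · exact (this (M.symmetric i j ▸ h) (lt_of_le_of_ne (not_lt.1 hij)
      (M.ne_of_eq_two h).symm)).symm
  have := braidGen_altProd M hij (by rw [h]; norm_num)
  rw [h] at this
  simpa [altProd, Commute, SemiconjBy, mul_assoc] using this

def coxGraph : SimpleGraph (Fin n) where
  Adj := coxAdj M
  symm := ⟨fun _ _ h => ⟨h.1.symm, by rw [M.symmetric]; exact h.2⟩⟩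
  loopless := ⟨fun _ h => h.1 rfl⟩

variable {M} in
lemma coxAdj_symm {i j : Fin n} (h : coxAdj M i j) : coxAdj M j i :=
  (coxGraph M).adj_symm h

lemma coxGraph_connected (hn : 0 < n)
    (hconn : ∀ i j : Fin n, Relation.ReflTransGen (coxAdj M) i j) : (coxGraph M).Connected :=
  (SimpleGraph.connected_iff _).2
    ⟨fun i j => (SimpleGraph.reachable_iff_reflTransGen i j).2 (hconn i j), ⟨⟨0, hn⟩⟩⟩

lemma eq_two_of_two_le_dist {i j : Fin n} (h : 2 ≤ (coxGraph M).dist i j) : M i j = 2 := by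
  by_contra hM
  have hne : i ≠ j := by rintro rfl; simp at h
  have : (coxGraph M).dist i j = 1 := SimpleGraph.dist_eq_one_iff_adj.2 ⟨hne, hM⟩
  omega

end Coxeter

section EdgeGroup

variable {n : ℕ} (M : CoxeterMatrix (Fin n))

abbrev EdgeGroup : Type _ := PresentedGroup { x | BethRel M x }

def edgeR (i j : Fin n) : EdgeGroup M := PresentedGroup.mk _ (rW M i j)

def edgeT (i : Fin n) : EdgeGroup M := PresentedGroup.mk _ (tW M i)

variable {M}

lemma mk_rW (i j : Fin n) : PresentedGroup.mk { x | BethRel M x } (rW M i j) = edgeR M i j := rfl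

lemma mk_tW (i : Fin n) : PresentedGroup.mk { x | BethRel M x } (tW M i) = edgeT M i := rfl

lemma mk_eq_of_bethRel {w₁ w₂ : FreeGroup (BethGen M)} (h : BethRel M (w₁ * w₂⁻¹)) :
    PresentedGroup.mk { x | BethRel M x } w₁ = PresentedGroup.mk _ w₂ :=
  PresentedGroup.mk_eq_mk_of_mul_inv_mem h

lemma rW_of_lt {i j : Fin n} (hij : i < j) (hm : M i j ≠ 2) :
    rW M i j = FreeGroup.of (α := BethGen M) (Sum.inl ⟨(i, j), hij, hm⟩) :=
  dif_pos ⟨hij, hm⟩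

lemma rW_swap (i j : Fin n) : rW M j i = (rW M i j)⁻¹ := by
  unfold rW
  by_cases h : i < j ∧ M i j ≠ 2
  · rw [dif_neg (fun h' => lt_asymm h.1 h'.1), dif_pos h, dif_pos h]
  · by_cases h' : j < i ∧ M j i ≠ 2 <;> simp [h, h']

lemma edgeR_swap (i j : Fin n) : edgeR M j i = (edgeR M i j)⁻¹ := by
  rw [edgeR, edgeR, rW_swap, map_inv]

lemma mk_pathW_eq_one {i : Fin n} {l : List (Fin n)} (hl : List.IsChain (coxAdj M) (i :: l))
    (hlast : (i :: l).getLast (List.cons_ne_nil _ _) = i) :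
    PresentedGroup.mk { x | BethRel M x } (pathW M i l) = 1 := by
  obtain rfl | ⟨l, a, rfl⟩ := l.eq_nil_or_concat
  · exact map_one _
  · rw [List.concat_eq_append] at hl hlast ⊢
    obtain rfl : a = i := by simpa using hlast
    exact PresentedGroup.one_of_mem (BethRel.cycle a l hl)

def walkWord : ∀ {i j : Fin n}, (coxGraph M).Walk i j → EdgeGroup M
  | _, _, .nil => 1
  | i, _, .cons (v := k) _ p => edgeR M i k * walkWord p

lemma walkWord_eq_mk_pathW {i j : Fin n} (p : (coxGraph M).Walk i j) :
    walkWord p = PresentedGroup.mk _ (pathW M i p.support.tail) := by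
  induction p with
  | nil => exact (map_one _).symm
  | cons h p ih =>
    rw [walkWord, ih, edgeR, ← map_mul]
    cases p <;> rfl

lemma walkWord_append {i j k : Fin n} (p : (coxGraph M).Walk i j) (q : (coxGraph M).Walk j k) :
    walkWord (p.append q) = walkWord p * walkWord q := by
  induction p with
  | nil => exact (one_mul _).symm
  | cons h p ih => rw [SimpleGraph.Walk.cons_append, walkWord, walkWord, ih, mul_assoc]

lemma walkWord_reverse {i j : Fin n} (p : (coxGraph M).Walk i j) :
    walkWord p.reverse = (walkWord p)⁻¹ := by
  induction p with
  | nil => exact inv_one.symm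
  | cons h p ih =>
    rw [SimpleGraph.Walk.reverse_cons, walkWord_append, ih, walkWord, walkWord, walkWord,
      mul_one, edgeR_swap, mul_inv_rev]

lemma walkWord_eq_one_of_closed {i : Fin n} (p : (coxGraph M).Walk i i) : walkWord p = 1 := by
  rw [walkWord_eq_mk_pathW]
  refine mk_pathW_eq_one ?_ ?_
  · rw [p.cons_tail_support]; exact p.isChain_adj_support
  · simp only [p.cons_tail_support, SimpleGraph.Walk.getLast_support]

lemma walkWord_eq {i j : Fin n} (p q : (coxGraph M).Walk i j) : walkWord p = walkWord q := by
  have := walkWord_eq_one_of_closed (p.append q.reverse)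
  rwa [walkWord_append, walkWord_reverse, mul_inv_eq_one] at this

variable (M) in
open Classical in
/-- `𝗋_{i i₁} 𝗋_{i₁ i₂} ⋯ 𝗋_{i_a j}` along any walk from `i` to `j` (it does not depend on the
walk, by the cycle relations), and `1` if there is none. -/
noncomputable def pathWord (i j : Fin n) : EdgeGroup M :=
  if h : (coxGraph M).Reachable i j then walkWord h.some else 1

lemma pathWord_eq_walkWord {i j : Fin n} (p : (coxGraph M).Walk i j) :
    pathWord M i j = walkWord p := by
  rw [pathWord, dif_pos ⟨p⟩]
  exact walkWord_eq _ _

lemma pathWord_self (i : Fin n) : pathWord M i i = 1 :=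
  pathWord_eq_walkWord .nil

lemma pathWord_of_adj {i j : Fin n} (h : (coxGraph M).Adj i j) : pathWord M i j = edgeR M i j := by
  rw [pathWord_eq_walkWord (.cons h .nil), walkWord, walkWord, mul_one]

lemma pathWord_mul (hG : (coxGraph M).Connected) (i j k : Fin n) :
    pathWord M i j * pathWord M j k = pathWord M i k := by
  obtain ⟨p⟩ := hG.preconnected i j
  obtain ⟨q⟩ := hG.preconnected j k
  rw [pathWord_eq_walkWord p, pathWord_eq_walkWord q, pathWord_eq_walkWord (p.append q),
    walkWord_append]

lemma pathWord_swap (hG : (coxGraph M).Connected) (i j : Fin n) :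
    pathWord M j i = (pathWord M i j)⁻¹ := by
  rw [eq_inv_iff_mul_eq_one, pathWord_mul hG, pathWord_self]

end EdgeGroup

section CommRel

variable {n : ℕ} {M : CoxeterMatrix (Fin n)}

variable (M) in
/-- What the commutation `g_i g_j = g_j g_i` becomes in `𝔅`. -/
def CommRel (i j : Fin n) : Prop :=
  edgeT M i = pathWord M i j * pathWord M i j * edgeT M j ∧
    Commute (pathWord M i j) (edgeT M j)

lemma CommRel.symm (hG : (coxGraph M).Connected) {i j : Fin n} (h : CommRel M i j) :
    CommRel M j i := by
  rw [CommRel, pathWord_swap hG]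
  exact twist_symm h.1 h.2

lemma commRel_of_adj_adj (hG : (coxGraph M).Connected) {i u j : Fin n}
    (hiu : (coxGraph M).Adj i u) (huj : (coxGraph M).Adj u j) (h : M i j = 2) :
    CommRel M i j := by
  wlog hij : i < j generalizing i j
  · exact (this huj.symm hiu.symm (M.symmetric i j ▸ h)
      (lt_of_le_of_ne (not_lt.1 hij) (M.ne_of_eq_two h).symm)).symm hG
  have hρ : pathWord M i j = edgeR M i u * edgeR M u j := by
    rw [← pathWord_mul hG i u j, pathWord_of_adj hiu, pathWord_of_adj huj]
  have hρ' : edgeR M j u * edgeR M u i = (pathWord M i j)⁻¹ := by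
    rw [hρ, mul_inv_rev, edgeR_swap u j, edgeR_swap i u]
  have h₁ := mk_eq_of_bethRel (BethRel.two_left i u j hiu huj hij h)
  have h₂ := mk_eq_of_bethRel (BethRel.two_right i u j hiu huj hij h)
  simp only [map_mul] at h₁ h₂
  refine twist_of_mul_eq_inv_mul ?_ ?_
  · rw [← hρ', hρ]; exact h₁
  · rw [← hρ', hρ, ← mul_assoc]; exact h₂

lemma commRel_of_adj_adj_adj (hG : (coxGraph M).Connected) {i u v j : Fin n}
    (hiu : (coxGraph M).Adj i u) (huv : (coxGraph M).Adj u v) (hvj : (coxGraph M).Adj v j)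
    (h : M i j = 2) : CommRel M i j := by
  wlog hij : i < j generalizing i u v j
  · exact (this hvj.symm huv.symm hiu.symm (M.symmetric i j ▸ h)
      (lt_of_le_of_ne (not_lt.1 hij) (M.ne_of_eq_two h).symm)).symm hG
  have hρ : pathWord M i j = edgeR M i u * edgeR M u v * edgeR M v j := by
    rw [← pathWord_mul hG i u j, ← pathWord_mul hG u v j, pathWord_of_adj hiu,
      pathWord_of_adj huv, pathWord_of_adj hvj, mul_assoc]
  have hρ' : edgeR M j v * edgeR M v u * edgeR M u i = (pathWord M i j)⁻¹ := by
    rw [hρ, mul_inv_rev, mul_inv_rev, edgeR_swap v j, edgeR_swap u v, edgeR_swap i u, mul_assoc]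
  have h₁ := mk_eq_of_bethRel (BethRel.three_left i u v j hiu huv hvj hij h)
  have h₂ := mk_eq_of_bethRel (BethRel.three_right i u v j hiu huv hvj hij h)
  simp only [map_mul] at h₁ h₂
  refine twist_of_mul_eq_inv_mul ?_ ?_
  · rw [← hρ', hρ]; exact h₁
  · rw [← hρ', hρ, ← mul_assoc, ← mul_assoc]; exact h₂

lemma edgeR_commute {a b c d : Fin n} (hab : (coxGraph M).Adj a b) (hcd : (coxGraph M).Adj c d)
    (hac : M a c = 2) (had : M a d = 2) (hbc : M b c = 2) (hbd : M b d = 2) :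
    Commute (edgeR M a b) (edgeR M c d) := by
  wlog h₁ : a < b generalizing a b
  · have := this hab.symm hbc hbd hac had (lt_of_le_of_ne (not_lt.1 h₁) hab.ne.symm)
    rw [edgeR_swap a b] at this
    exact Commute.inv_left_iff.1 this
  wlog h₂ : c < d generalizing c d
  · have := this hcd.symm had hac hbd hbc (lt_of_le_of_ne (not_lt.1 h₂) hcd.ne.symm)
    rw [edgeR_swap c d] at this
    exact Commute.inv_right_iff.1 this
  have h := mk_eq_of_bethRel (BethRel.comm ⟨(a, b), h₁, hab.2⟩ ⟨(c, d), h₂, hcd.2⟩ hac had hbc hbd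
    (M.ne_of_eq_two hac) (M.ne_of_eq_two had) (M.ne_of_eq_two hbc) (M.ne_of_eq_two hbd))
  rw [Commute, SemiconjBy, edgeR, edgeR, rW_of_lt h₁ hab.2, rW_of_lt h₂ hcd.2]
  exact h

/-- For distant `i` and `j`, split `𝗋_{i ⋯ j} = 𝗋_{iv} 𝗋_{v ⋯ w} 𝗋_{wj}` and
`𝗋_{i ⋯ j} = 𝗋_{i ⋯ y} 𝗋_{y ⋯ j}`: the two end edges commute, which gives `𝗍_i = ρ² 𝗍_j`,
and this in turn forces `𝗋_{i ⋯ y}` and `𝗋_{y ⋯ j}` to commute. -/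
lemma commRel_of_inner_commRels (hG : (coxGraph M).Connected) {i v w y j : Fin n}
    (hiv : (coxGraph M).Adj i v) (hwj : (coxGraph M).Adj w j) (hij : M i j = 2)
    (hiw : M i w = 2) (hvj : M v j = 2) (hvw : M v w = 2)
    (h_vw : CommRel M v w) (h_iw : CommRel M i w) (h_vj : CommRel M v j)
    (h_iy : CommRel M i y) (h_yj : CommRel M y j) : CommRel M i j := by
  have hρ : pathWord M i j = edgeR M i v * pathWord M v w * edgeR M w j := by
    rw [← pathWord_of_adj hiv, ← pathWord_of_adj hwj, pathWord_mul hG, pathWord_mul hG]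
  have h_sq : edgeT M i = pathWord M i j * pathWord M i j * edgeT M j := by
    rw [hρ]
    refine twist_of_commute_ends (edgeR_commute hiv hwj hiw hij hvw hvj) h_vw.1 ?_ ?_
    · rw [← pathWord_of_adj hiv, pathWord_mul hG]; exact h_iw.1
    · rw [← pathWord_of_adj hwj, pathWord_mul hG]; exact h_vj.1
  refine ⟨h_sq, ?_⟩
  rw [← pathWord_mul hG i y j] at h_sq ⊢
  exact commute_mul_of_twists h_iy.1 h_iy.2 h_yj.1 h_yj.2 h_sq

theorem commRel_of_eq_two (hG : (coxGraph M).Connected) {i j : Fin n} (h : M i j = 2) :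
    CommRel M i j := by
  induction hd : (coxGraph M).dist i j using Nat.strong_induction_on generalizing i j with
  | _ d ih =>
  have ih' : ∀ {x y}, 2 ≤ (coxGraph M).dist x y → (coxGraph M).dist x y < d → CommRel M x y :=
    fun h₂ hlt => ih _ hlt (eq_two_of_two_le_dist M h₂) rfl
  have hdist : ∀ {x y}, (coxGraph M).Adj x y → (coxGraph M).dist x y = 1 :=
    SimpleGraph.dist_eq_one_iff_adj.2
  have tri := fun x y z => hG.dist_triangle (u := x) (v := y) (w := z)
  have hd₂ : 2 ≤ d := hd ▸ hG.one_lt_dist_of_ne_of_not_adj (M.ne_of_eq_two h) (·.2 h)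
  obtain ⟨v, hiv, hvj⟩ := hG.exists_adj_dist_add_one_eq (M.ne_of_eq_two h)
  obtain ⟨y, hvy, hyj⟩ := hG.exists_adj_dist_add_one_eq (u := v) (v := j) (by
    rintro rfl; simp at hvj; omega)
  rcases (by omega : d = 2 ∨ d = 3 ∨ 4 ≤ d) with rfl | rfl | hd₄
  · exact commRel_of_adj_adj hG hiv (SimpleGraph.dist_eq_one_iff_adj.1 (by omega)) h
  · exact commRel_of_adj_adj_adj hG hiv hvy (SimpleGraph.dist_eq_one_iff_adj.1 (by omega)) h
  obtain ⟨w, hjw, hwv⟩ := hG.exists_adj_dist_add_one_eq (u := j) (v := v) (by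
    rintro rfl; simp at hvj; omega)
  have := hdist hiv; have := hdist hvy; have := hdist hjw
  have := tri i v w; have := tri i w j; have := tri i v y; have := tri i y j
  have := SimpleGraph.dist_comm (G := coxGraph M) (u := j) (v := v)
  have := SimpleGraph.dist_comm (G := coxGraph M) (u := j) (v := w)
  have := SimpleGraph.dist_comm (G := coxGraph M) (u := w) (v := v)
  exact commRel_of_inner_commRels (y := y) hG hiv hjw.symm h (eq_two_of_two_le_dist M (by omega))
    (eq_two_of_two_le_dist M (by omega)) (eq_two_of_two_le_dist M (by omega))
    (ih' (by omega) (by omega)) (ih' (by omega) (by omega)) (ih' (by omega) (by omega))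
    (ih' (by omega) (by omega)) (ih' (by omega) (by omega))

end CommRel

section PathRels

variable {n : ℕ} {M : CoxeterMatrix (Fin n)}

lemma pathWord_even_rels (hG : (coxGraph M).Connected) {i j : Fin n} (hij : i < j) {q : ℕ}
    (hq : M i j = 2 * q) (hq0 : 0 < q) :
    (pathWord M i j * edgeT M j) ^ q = ((pathWord M i j)⁻¹ * edgeT M i) ^ q ∧
      (edgeT M j * pathWord M i j) ^ q = ((pathWord M i j)⁻¹ * edgeT M i) ^ q := by
  obtain rfl | hq2 := (by omega : q = 1 ∨ 2 ≤ q)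
  · obtain ⟨h_sq, h_comm⟩ := commRel_of_eq_two hG (hq.trans (mul_one 2))
    simp only [pow_one, h_sq, ← h_comm.eq]
    constructor <;> group
  have hadj : (coxGraph M).Adj i j := ⟨hij.ne, by omega⟩
  have hq' : M i j / 2 = q := by omega
  have h₁ := mk_eq_of_bethRel (BethRel.even_left (M := M) i j hij (by omega) (by omega))
  have h₂ := mk_eq_of_bethRel (BethRel.even_right (M := M) i j hij (by omega) (by omega))
  simp only [map_pow, map_mul, mk_rW, mk_tW, edgeR_swap i j, hq'] at h₁ h₂
  rw [pathWord_of_adj hadj]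
  exact ⟨h₁, h₂⟩

lemma pathWord_odd_rels {i j : Fin n} (hij : i < j) {k : ℕ}
    (hk : M i j = 2 * k + 1) :
    (pathWord M i j * edgeT M j) ^ k * pathWord M i j = ((pathWord M i j)⁻¹ * edgeT M i) ^ k ∧
      ((pathWord M i j)⁻¹ * edgeT M i) ^ (k + 1) =
        edgeT M j * (pathWord M i j * edgeT M j) ^ k := by
  have hadj : (coxGraph M).Adj i j := ⟨hij.ne, by omega⟩
  have h₁ := mk_eq_of_bethRel (BethRel.odd_left (M := M) i j hij (by omega) (by omega))
  have h₂ := mk_eq_of_bethRel (BethRel.odd_right (M := M) i j hij (by omega) (by omega))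
  simp only [map_pow, map_mul, mk_rW, mk_tW, edgeR_swap i j, show (M i j - 1) / 2 = k by omega,
    show (M i j + 1) / 2 = k + 1 by omega] at h₁ h₂
  rw [pathWord_of_adj hadj]
  exact ⟨h₁, odd_rel_swap h₁ h₂⟩

end PathRels

section ToBraid

variable {n : ℕ} (M : CoxeterMatrix (Fin n))

def bethGenImage : BethGen M → BraidGroup M
  | Sum.inl e => braidGen M e.1.1 * (braidGen M e.1.2)⁻¹
  | Sum.inr i => braidGen M i * braidGen M i

variable {M}

lemma lift_tW (i : Fin n) :
    FreeGroup.lift (bethGenImage M) (tW M i) = braidGen M i * braidGen M i :=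
  FreeGroup.lift_apply_of

lemma lift_of_inl (e : CoxEdge M) : FreeGroup.lift (bethGenImage M) (FreeGroup.of (Sum.inl e)) =
    braidGen M e.1.1 * (braidGen M e.1.2)⁻¹ :=
  FreeGroup.lift_apply_of

lemma lift_rW {i j : Fin n} (h : coxAdj M i j) :
    FreeGroup.lift (bethGenImage M) (rW M i j) = braidGen M i * (braidGen M j)⁻¹ := by
  have of_lt : ∀ {a b : Fin n} (hab : a < b) (hm : M a b ≠ 2),
      FreeGroup.lift (bethGenImage M) (rW M a b) = braidGen M a * (braidGen M b)⁻¹ := by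
    intro a b hab hm
    rw [rW_of_lt hab hm]
    exact FreeGroup.lift_apply_of
  rcases h.1.lt_or_gt with hij | hji
  · exact of_lt hij h.2
  · rw [rW_swap, map_inv, of_lt hji (M.symmetric i j ▸ h.2), mul_inv_rev, inv_inv]

lemma lift_pathW {i : Fin n} {l : List (Fin n)} (hl : List.IsChain (coxAdj M) (i :: l)) :
    FreeGroup.lift (bethGenImage M) (pathW M i l) =
      braidGen M i * (braidGen M ((i :: l).getLast (List.cons_ne_nil _ _)))⁻¹ := by
  induction l generalizing i with
  | nil => simp [pathW]
  | cons j l ih =>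
    rw [List.isChain_cons_cons] at hl
    rw [pathW, map_mul, lift_rW hl.1, ih hl.2, List.getLast_cons (List.cons_ne_nil _ _)]
    group

lemma lift_bethRel {r : FreeGroup (BethGen M)} (hr : BethRel M r) :
    FreeGroup.lift (bethGenImage M) r = 1 := by
  induction hr with
  | cycle i l h => rw [lift_pathW h]; simp
  | two_left i j k hij hjk _ h2 =>
    rw [map_mul, map_inv, mul_inv_eq_one]
    simp only [map_mul, lift_rW hij, lift_rW hjk, lift_rW (coxAdj_symm hij),
      lift_rW (coxAdj_symm hjk), lift_tW, mul_assoc, inv_mul_cancel_left]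
    exact (braidGen_commute M h2).eq
  | two_right i j k hij hjk _ h2 =>
    rw [map_mul, map_inv, mul_inv_eq_one]
    simp only [map_mul, lift_rW hij, lift_rW hjk, lift_rW (coxAdj_symm hij),
      lift_rW (coxAdj_symm hjk), lift_tW, mul_assoc, inv_mul_cancel_left,
      (braidGen_commute M h2).inv_right.eq, mul_inv_cancel_left]
  | three_left i j k l hij hjk hkl _ h2 =>
    rw [map_mul, map_inv, mul_inv_eq_one]
    simp only [map_mul, lift_rW hij, lift_rW hjk, lift_rW hkl, lift_rW (coxAdj_symm hij),
      lift_rW (coxAdj_symm hjk), lift_rW (coxAdj_symm hkl), lift_tW, mul_assoc, inv_mul_cancel_left]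
    exact (braidGen_commute M h2).eq
  | three_right i j k l hij hjk hkl _ h2 =>
    rw [map_mul, map_inv, mul_inv_eq_one]
    simp only [map_mul, lift_rW hij, lift_rW hjk, lift_rW hkl, lift_rW (coxAdj_symm hij),
      lift_rW (coxAdj_symm hjk), lift_rW (coxAdj_symm hkl), lift_tW, mul_assoc, inv_mul_cancel_left,
      (braidGen_commute M h2).inv_right.eq, mul_inv_cancel_left]
  | even_left i j hij _ _ =>
    have hadj : coxAdj M i j := ⟨hij.ne, by omega⟩
    rw [map_mul, map_inv, mul_inv_eq_one]
    simp only [map_pow, map_mul, lift_rW hadj, lift_rW (coxAdj_symm hadj), lift_tW, mul_assoc,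
      inv_mul_cancel_left]
    exact braidGen_even M hij (by omega) (by omega)
  | even_right i j hij _ _ =>
    have hadj : coxAdj M i j := ⟨hij.ne, by omega⟩
    rw [map_mul, map_inv, mul_inv_eq_one]
    simp only [map_pow, map_mul, lift_rW hadj, lift_rW (coxAdj_symm hadj), lift_tW, mul_assoc,
      inv_mul_cancel_left]
    exact pow_sq_mul_inv_eq_of_pow_eq (braidGen_even M hij (by omega) (by omega))
  | odd_left i j hij hadj' _ =>
    have hadj : coxAdj M i j := ⟨hij.ne, hadj'⟩
    rw [map_mul, map_inv, mul_inv_eq_one]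
    simp only [map_pow, map_mul, lift_rW hadj, lift_rW (coxAdj_symm hadj), lift_tW, mul_assoc,
      inv_mul_cancel_left]
    rw [← mul_assoc, braidGen_odd M hij (by omega), mul_inv_cancel_right]
  | odd_right i j hij hadj' _ =>
    have hadj : coxAdj M i j := ⟨hij.ne, hadj'⟩
    rw [map_mul, map_inv, mul_inv_eq_one]
    simp only [map_pow, map_mul, lift_rW hadj, lift_rW (coxAdj_symm hadj), lift_tW, mul_assoc,
      inv_mul_cancel_left]
    rw [show (M i j + 1) / 2 = (M i j - 1) / 2 + 1 by omega]
    exact pow_succ_eq_sq_mul_of_braid (braidGen_odd M hij (by omega))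
  | comm e e' h11 h12 h21 h22 _ _ _ _ =>
    have key : FreeGroup.lift (bethGenImage M) (FreeGroup.of (α := BethGen M) (.inl e) *
        .of (.inl e') * (.of (.inl e') * .of (.inl e))⁻¹) = 1 := by
      rw [map_mul, map_inv, mul_inv_eq_one, map_mul, map_mul]
      refine Commute.eq (a := FreeGroup.lift (bethGenImage M) (FreeGroup.of (Sum.inl e)))
        (b := FreeGroup.lift (bethGenImage M) (FreeGroup.of (Sum.inl e'))) ?_
      rw [lift_of_inl, lift_of_inl]
      exact ((braidGen_commute M h11).mul_right (braidGen_commute M h12).inv_right).mul_left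
        ((braidGen_commute M h21).mul_right (braidGen_commute M h22).inv_right).inv_left
    exact key

end ToBraid

section Flip

variable {G : Type*} [Group G]

def keepPerm (a b : G) : Equiv.Perm (G × Bool) where
  toFun
    | (x, false) => (a * x, false)
    | (x, true) => (b * x, true)
  invFun
    | (x, false) => (a⁻¹ * x, false)
    | (x, true) => (b⁻¹ * x, true)
  left_inv := by rintro ⟨x, _ | _⟩ <;> simp
  right_inv := by rintro ⟨x, _ | _⟩ <;> simp

def flipPerm (a b : G) : Equiv.Perm (G × Bool) where
  toFun
    | (x, false) => (a * x, true)
    | (x, true) => (b * x, false)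
  invFun
    | (x, true) => (a⁻¹ * x, false)
    | (x, false) => (b⁻¹ * x, true)
  left_inv := by rintro ⟨x, _ | _⟩ <;> simp
  right_inv := by rintro ⟨x, _ | _⟩ <;> simp

@[simp] lemma keepPerm_false (a b x : G) : keepPerm a b (x, false) = (a * x, false) := rfl
@[simp] lemma keepPerm_true (a b x : G) : keepPerm a b (x, true) = (b * x, true) := rfl
@[simp] lemma flipPerm_false (a b x : G) : flipPerm a b (x, false) = (a * x, true) := rfl
@[simp] lemma flipPerm_true (a b x : G) : flipPerm a b (x, true) = (b * x, false) := rfl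

lemma flipPerm_mul_flipPerm (a b c d : G) :
    flipPerm a b * flipPerm c d = keepPerm (b * c) (a * d) := by
  ext ⟨x, _ | _⟩ <;> simp [mul_assoc]

lemma keepPerm_mul_keepPerm (a b c d : G) :
    keepPerm a b * keepPerm c d = keepPerm (a * c) (b * d) := by
  ext ⟨x, _ | _⟩ <;> simp [mul_assoc]

lemma keepPerm_mul_flipPerm (a b c d : G) :
    keepPerm a b * flipPerm c d = flipPerm (b * c) (a * d) := by
  ext ⟨x, _ | _⟩ <;> simp [mul_assoc]

lemma flipPerm_inv (a b : G) : (flipPerm a b)⁻¹ = flipPerm b⁻¹ a⁻¹ := by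
  rw [inv_eq_iff_mul_eq_one, flipPerm_mul_flipPerm, mul_inv_cancel, mul_inv_cancel]
  ext ⟨x, _ | _⟩ <;> simp

lemma keepPerm_pow (a b : G) : ∀ q : ℕ, keepPerm a b ^ q = keepPerm (a ^ q) (b ^ q)
  | 0 => by ext ⟨x, _ | _⟩ <;> simp
  | q + 1 => by rw [pow_succ, keepPerm_pow a b q, keepPerm_mul_keepPerm, ← pow_succ, ← pow_succ]

lemma altProd_flipPerm_even (a b c d : G) (q : ℕ) :
    altProd (flipPerm a b) (flipPerm c d) (2 * q) = keepPerm ((b * c) ^ q) ((a * d) ^ q) := by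
  rw [altProd_two_mul, flipPerm_mul_flipPerm, keepPerm_pow]

lemma altProd_flipPerm_odd (a b c d : G) (q : ℕ) :
    altProd (flipPerm a b) (flipPerm c d) (2 * q + 1) =
      flipPerm ((a * d) ^ q * a) ((b * c) ^ q * b) := by
  rw [altProd_two_mul_add_one, flipPerm_mul_flipPerm, keepPerm_pow, keepPerm_mul_flipPerm]

lemma conj_inv_pow (a x : G) (q : ℕ) : (a⁻¹ * x * a) ^ q = a⁻¹ * x ^ q * a := by
  simpa using conj_pow (a := a⁻¹) (b := x) (i := q)

lemma flipPerm_braid_even {ρ σ s t : G} {q : ℕ} (h₁ : (ρ * t) ^ q = (ρ⁻¹ * s) ^ q)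
    (h₂ : (t * ρ) ^ q = (ρ⁻¹ * s) ^ q) :
    altProd (flipPerm ((ρ * σ)⁻¹ * s) (ρ * σ)) (flipPerm (σ⁻¹ * t) σ) (2 * q) =
      altProd (flipPerm (σ⁻¹ * t) σ) (flipPerm ((ρ * σ)⁻¹ * s) (ρ * σ)) (2 * q) := by
  rw [altProd_flipPerm_even, altProd_flipPerm_even]
  congr 1
  · rw [mul_assoc, mul_inv_cancel_left, h₁, mul_inv_rev, ← mul_assoc, mul_inv_cancel_left]
  · rw [show (ρ * σ)⁻¹ * s * σ = σ⁻¹ * (ρ⁻¹ * s) * σ by group,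
      show σ⁻¹ * t * (ρ * σ) = σ⁻¹ * (t * ρ) * σ by group, conj_inv_pow, conj_inv_pow, h₂]

lemma flipPerm_braid_odd {ρ σ s t : G} {k : ℕ} (h₁ : (ρ * t) ^ k * ρ = (ρ⁻¹ * s) ^ k)
    (h₂ : (ρ⁻¹ * s) ^ (k + 1) = t * (ρ * t) ^ k) :
    altProd (flipPerm ((ρ * σ)⁻¹ * s) (ρ * σ)) (flipPerm (σ⁻¹ * t) σ) (2 * k + 1) =
      altProd (flipPerm (σ⁻¹ * t) σ) (flipPerm ((ρ * σ)⁻¹ * s) (ρ * σ)) (2 * k + 1) := by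
  rw [altProd_flipPerm_odd, altProd_flipPerm_odd]
  congr 1
  · calc ((ρ * σ)⁻¹ * s * σ) ^ k * ((ρ * σ)⁻¹ * s) = σ⁻¹ * (ρ⁻¹ * s) ^ (k + 1) := by
          rw [show (ρ * σ)⁻¹ * s * σ = σ⁻¹ * (ρ⁻¹ * s) * σ by group, conj_inv_pow, pow_succ]
          group
      _ = (σ⁻¹ * t * (ρ * σ)) ^ k * (σ⁻¹ * t) := by
          rw [h₂, show σ⁻¹ * t * (ρ * σ) = σ⁻¹ * (t * ρ) * σ by group, conj_inv_pow, ← mul_pow_mul]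
          group
  · rw [mul_assoc ρ σ, mul_inv_cancel_left, ← mul_assoc, h₁,
      show σ * ((ρ * σ)⁻¹ * s) = ρ⁻¹ * s by group]

end Flip

theorem PresentedGroup.semiconj_of_forall_of {α X Y : Type*} {rels : Set (FreeGroup α)}
    (π₁ : PresentedGroup rels →* Equiv.Perm X) (π₂ : PresentedGroup rels →* Equiv.Perm Y)
    (f : X → Y) (h : ∀ a, Function.Semiconj f (π₁ (.of a)) (π₂ (.of a)))
    (g : PresentedGroup rels) : Function.Semiconj f (π₁ g) (π₂ g) :=
  let H : Subgroup (PresentedGroup rels) :=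
    { carrier := { g | Function.Semiconj f (π₁ g) (π₂ g) }
      one_mem' := by simp [Function.Semiconj]
      mul_mem' := fun ha hb => by simpa using ha.comp_right hb
      inv_mem' := fun {g} hg => by
        simpa using hg.inverses_right (π₁ g).right_inv (π₂ g).left_inv }
  PresentedGroup.generated_by rels H h g

section Alternating

variable {n : ℕ} {M : CoxeterMatrix (Fin n)}

variable (M) in
noncomputable def toBraid : EdgeGroup M →* BraidGroup M :=
  PresentedGroup.toGroup fun _ hr => lift_bethRel hr

lemma toBraid_of (x : BethGen M) : toBraid M (PresentedGroup.of x) = bethGenImage M x :=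
  PresentedGroup.toGroup.of _

lemma toBraid_edgeT (i : Fin n) : toBraid M (edgeT M i) = braidGen M i * braidGen M i :=
  toBraid_of _

lemma toBraid_pathWord (hG : (coxGraph M).Connected) (i j : Fin n) :
    toBraid M (pathWord M i j) = braidGen M i * (braidGen M j)⁻¹ := by
  obtain ⟨p⟩ := hG.preconnected i j
  rw [pathWord_eq_walkWord p, walkWord_eq_mk_pathW]
  refine (lift_pathW ?_).trans ?_
  · rw [p.cons_tail_support]; exact p.isChain_adj_support
  · simp only [p.cons_tail_support, SimpleGraph.Walk.getLast_support]

lemma braidSign_braidGen (i : Fin n) : braidSign M (braidGen M i) = -1 :=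
  PresentedGroup.toGroup.of _

lemma braidSign_toBraid (y : EdgeGroup M) : braidSign M (toBraid M y) = 1 := by
  suffices (braidSign M).comp (toBraid M) = 1 from DFunLike.congr_fun this y
  refine PresentedGroup.ext fun x => ?_
  rw [MonoidHom.comp_apply, toBraid_of, MonoidHom.one_apply]
  rcases x with e | i <;> simp [bethGenImage, braidSign_braidGen]

lemma edgeR_coxEdge (e : CoxEdge M) : edgeR M e.1.1 e.1.2 = PresentedGroup.of (Sum.inl e) := by
  rw [edgeR, rW_of_lt e.2.1 e.2.2]
  rfl

/-- Left multiplication on `𝓑 = 𝓑⁺ ⊔ g_{i₀}⁻¹ 𝓑⁺`, the sheet `true` standing for the coset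
`g_{i₀}⁻¹ 𝓑⁺` and `pathWord M x i₀` for `g_x g_{i₀}⁻¹`. -/
noncomputable def braidAction (hG : (coxGraph M).Connected) (i₀ : Fin n) :
    BraidGroup M →* Equiv.Perm (EdgeGroup M × Bool) :=
  PresentedGroup.toGroup
    (f := fun x => flipPerm ((pathWord M x i₀)⁻¹ * edgeT M x) (pathWord M x i₀)) (by
      rintro r ⟨i, j, hij, hm, rfl⟩
      rw [map_mul, map_inv, mul_inv_eq_one, map_altProd, map_altProd, FreeGroup.lift_apply_of,
        FreeGroup.lift_apply_of, ← pathWord_mul hG i j i₀]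
      obtain ⟨k, hk | hk⟩ := Nat.even_or_odd' (M i j)
      · obtain ⟨h₁, h₂⟩ := pathWord_even_rels hG hij hk (by omega)
        rw [hk]
        exact flipPerm_braid_even h₁ h₂
      · obtain ⟨h₁, h₂⟩ := pathWord_odd_rels hij hk
        rw [hk]
        exact flipPerm_braid_odd h₁ h₂)

lemma braidAction_braidGen (hG : (coxGraph M).Connected) (i₀ x : Fin n) :
    braidAction hG i₀ (braidGen M x) =
      flipPerm ((pathWord M x i₀)⁻¹ * edgeT M x) (pathWord M x i₀) :=
  PresentedGroup.toGroup.of _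

variable (M) in
noncomputable def sheetSection (i₀ : Fin n) : EdgeGroup M × Bool → BraidGroup M
  | (y, false) => toBraid M y
  | (y, true) => (braidGen M i₀)⁻¹ * toBraid M y

lemma sheetSection_semiconj (hG : (coxGraph M).Connected) (i₀ : Fin n) (u : BraidGroup M) :
    Function.Semiconj (sheetSection M i₀) (braidAction hG i₀ u)
      (MulAction.toPermHom (BraidGroup M) (BraidGroup M) u) := by
  refine PresentedGroup.semiconj_of_forall_of _
    (MulAction.toPermHom (BraidGroup M) (BraidGroup M)) _ (fun x => ?_) u
  change Function.Semiconj _ (braidAction hG i₀ (braidGen M x))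
    (MulAction.toPermHom (BraidGroup M) (BraidGroup M) (braidGen M x))
  rintro ⟨y, _ | _⟩ <;>
    simp only [braidAction_braidGen, flipPerm_false, flipPerm_true, sheetSection, map_mul, map_inv,
      toBraid_pathWord hG, toBraid_edgeT, MulAction.coe_toPermHom, MulAction.toPerm_apply,
      smul_eq_mul] <;>
    group

lemma braidAction_toBraid (hG : (coxGraph M).Connected) (i₀ : Fin n) (y : EdgeGroup M) :
    Function.Semiconj (·, false) (MulAction.toPermHom _ _ y) (braidAction hG i₀ (toBraid M y)) := by
  refine PresentedGroup.semiconj_of_forall_of _ ((braidAction hG i₀).comp (toBraid M)) _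
    (fun x => ?_) y
  intro z
  simp only [MonoidHom.comp_apply, toBraid_of, MulAction.coe_toPermHom, MulAction.toPerm_apply,
    smul_eq_mul]
  rcases x with e | i
  · have hσ : pathWord M e.1.1 i₀ * (pathWord M e.1.2 i₀)⁻¹ = PresentedGroup.of (Sum.inl e) := by
      rw [← pathWord_swap hG, pathWord_mul hG, pathWord_of_adj ⟨e.2.1.ne, e.2.2⟩, edgeR_coxEdge]
    simp only [bethGenImage, map_mul, map_inv, braidAction_braidGen, flipPerm_inv,
      Equiv.Perm.mul_apply, flipPerm_false, flipPerm_true, ← mul_assoc, hσ]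
    rfl
  · simp only [bethGenImage, map_mul, braidAction_braidGen, Equiv.Perm.mul_apply, flipPerm_false,
      flipPerm_true, mul_assoc, mul_inv_cancel_left]
    rfl

lemma toBraid_injective (hG : (coxGraph M).Connected) (i₀ : Fin n) :
    Function.Injective (toBraid M) := by
  refine (injective_iff_map_eq_one _).2 fun y hy => ?_
  have h := braidAction_toBraid hG i₀ y 1
  simp only [MulAction.coe_toPermHom, MulAction.toPerm_apply, smul_eq_mul, mul_one, hy, map_one,
    Equiv.Perm.one_apply, Prod.mk.injEq] at h
  exact h.1

lemma exists_toBraid_eq (hG : (coxGraph M).Connected) (i₀ : Fin n) {u : BraidGroup M}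
    (hu : braidSign M u = 1) : ∃ y, toBraid M y = u := by
  have h := sheetSection_semiconj hG i₀ u (1, false)
  simp only [sheetSection, map_one, MulAction.coe_toPermHom, MulAction.toPerm_apply, smul_eq_mul,
    mul_one] at h
  rcases hp : braidAction hG i₀ u (1, false) with ⟨y, _ | _⟩
  · rw [hp] at h
    exact ⟨y, h⟩
  · rw [hp] at h
    have := congrArg (braidSign M) h
    rw [map_mul, map_inv, braidSign_braidGen, braidSign_toBraid, hu] at this
    exact absurd this (by decide)

end Alternating

/-- If the Coxeter graph of `M` is connected, the assignment `𝗍_i ↦ g_i²`,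
`𝗋_{ij} ↦ g_i g_j⁻¹` extends to a group isomorphism from the edge presentation `𝔅` onto the
alternating subgroup `𝓑⁺` of the braid group. -/
theorem edge_presentation_of_alternating_braid_group
    (n : ℕ) (hn : 0 < n) (M : CoxeterMatrix (Fin n))
    (hconn : ∀ i j : Fin n, Relation.ReflTransGen (coxAdj M) i j) :
    ∃ e : PresentedGroup { x | BethRel M x } ≃* braidAlt M,
      (∀ i : Fin n,
        ((e (PresentedGroup.of (Sum.inr i)) : braidAlt M) : BraidGroup M) =
          braidGen M i * braidGen M i) ∧
      (∀ ed : CoxEdge M,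
        ((e (PresentedGroup.of (Sum.inl ed)) : braidAlt M) : BraidGroup M) =
          braidGen M ed.1.1 * (braidGen M ed.1.2)⁻¹) := by
  have hG := coxGraph_connected M hn hconn
  let i₀ : Fin n := ⟨0, hn⟩
  let φ := (toBraid M).codRestrict (braidAlt M) braidSign_toBraid
  have hφ : Function.Bijective φ :=
    ⟨fun _ _ h => toBraid_injective hG i₀ (congrArg Subtype.val h),
      fun u => (exists_toBraid_eq hG i₀ u.2).imp fun _ hy => Subtype.ext hy⟩
  exact ⟨MulEquiv.ofBijective φ hφ, fun i => toBraid_of _, fun e => toBraid_of _⟩
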